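/- arXiv:2206.11949 — 6 statements merged into one kernel-verified Lean document; each statement's English description precedes it below -/
import Mathlib

section
/- Let R be a commutative ring. Suppose given a map cl : Ideal(R) → Ideal(R) and, for each g ∈ R, a map cl_g : Ideal(R_g) → Ideal(R_g), all of which are extensive (J ⊆ cl(J)) and order-preserving, and suppose cl commutes with localization at single elements: for every g ∈ R and every ideal J of R, cl_g(J·R_g) = cl(J)·R_g. Then glueability holds: for any family (f_α)_{α∈A} of elements of R, any g in the radical of the ideal generated by the f_α, any ideal J of R, and any z ∈ R such that the image z/1 of z in R_{f_α} lies in cl_{f_α}(J·R_{f_α}) for all α ∈ A, the image z/1 of z in R_g lies in cl_g(J·R_g). -/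
/-! Since `cl` commutes with localization, everything reduces to the extensions of the single
ideal `I = cl J`. And `z / 1 ∈ I·R_g` holds exactly when `g` lies in the radical of the colon
ideal `(I : z)`, so the set of such `g` is a radical ideal: once it contains every `f α`, it
contains the radical of the ideal they generate. -/

open Localization

theorem algebraMap_mem_map_away_iff_mem_radical_colon {R : Type*} [CommRing R]
    (I : Ideal R) (g z : R) :
    algebraMap R (Away g) z ∈ I.map (algebraMap R (Away g)) ↔
      g ∈ (I.colon (Ideal.span {z})).radical := by
  simp only [IsLocalization.algebraMap_mem_map_algebraMap_iff (Submonoid.powers g),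
    Submonoid.mem_powers_iff, exists_exists_eq_and, ← Ideal.mem_colon_span_singleton]
  rfl

theorem algebraMap_mem_map_away_of_mem_radical_span {R A : Type*} [CommRing R]
    (I : Ideal R) (f : A → R) {g : R} (hg : g ∈ (Ideal.span (Set.range f)).radical) (z : R)
    (hz : ∀ α, algebraMap R (Away (f α)) z ∈ I.map (algebraMap R (Away (f α)))) :
    algebraMap R (Away g) z ∈ I.map (algebraMap R (Away g)) := by
  simp only [algebraMap_mem_map_away_iff_mem_radical_colon] at hz ⊢
  exact Ideal.radical_le_radical_iff.mpr (Ideal.span_le.mpr (Set.range_subset_iff.mpr hz)) hg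

theorem glueable_of_commutes_with_localization_ideals_general {R : Type*} [CommRing R]
    (cl : Ideal R → Ideal R)
    (clg : ∀ g : R, Ideal (Localization.Away g) → Ideal (Localization.Away g))
    (hloc : ∀ g : R, ∀ J : Ideal R,
      clg g (J.map (algebraMap R (Localization.Away g)))
        = (cl J).map (algebraMap R (Localization.Away g)))
    {A : Type*} (f : A → R) (g : R)
    (hg : g ∈ (Ideal.span (Set.range f)).radical)
    (J : Ideal R) (z : R)
    (hz : ∀ α : A, algebraMap R (Localization.Away (f α)) z
      ∈ clg (f α) (J.map (algebraMap R (Localization.Away (f α))))) :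
    algebraMap R (Localization.Away g) z
      ∈ clg g (J.map (algebraMap R (Localization.Away g))) := by
  simp only [hloc] at hz ⊢
  exact algebraMap_mem_map_away_of_mem_radical_span (cl J) f hg z hz

/-- A preclosure operation on ideals that commutes with localization at single
elements is glueable. -/
theorem glueable_of_commutes_with_localization_ideals {R : Type*} [CommRing R]
    (cl : Ideal R → Ideal R)
    (clg : ∀ g : R, Ideal (Localization.Away g) → Ideal (Localization.Away g))
    (hext : ∀ J : Ideal R, J ≤ cl J)
    (hmono : ∀ J K : Ideal R, J ≤ K → cl J ≤ cl K)
    (hextg : ∀ g : R, ∀ J : Ideal (Localization.Away g), J ≤ clg g J)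
    (hmonog : ∀ g : R, ∀ J K : Ideal (Localization.Away g), J ≤ K → clg g J ≤ clg g K)
    (hloc : ∀ g : R, ∀ J : Ideal R,
      clg g (J.map (algebraMap R (Localization.Away g)))
        = (cl J).map (algebraMap R (Localization.Away g)))
    {A : Type*} (f : A → R) (g : R)
    (hg : g ∈ (Ideal.span (Set.range f)).radical)
    (J : Ideal R) (z : R)
    (hz : ∀ α : A, algebraMap R (Localization.Away (f α)) z
      ∈ clg (f α) (J.map (algebraMap R (Localization.Away (f α))))) :
    algebraMap R (Localization.Away g) z
      ∈ clg g (J.map (algebraMap R (Localization.Away g))) :=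
  glueable_of_commutes_with_localization_ideals_general cl clg hloc f g hg J z hz
end

section
/- Let R be a commutative ring and M an R-module. Suppose given a map cl : Submodule_R(M) → Submodule_R(M) and, for each g ∈ R, a map cl_g on R_g-submodules of the localized module M_g, all of which are extensive (L ⊆ cl(L)) and order-preserving, and suppose cl commutes with localization at single elements: for every g ∈ R and every submodule L ⊆ M, cl_g of the localization L_g (the image of L in M_g) equals the localization (cl(L))_g. Then glueability holds: for any family (f_α)_{α∈A} of elements of R, any g in the radical of the ideal generated by the f_α, any submodule L ⊆ M, and any z ∈ M such that the image z/1 of z in M_{f_α} lies in cl_{f_α}(L_{f_α}) for all α ∈ A, the image z/1 of z in M_g lies in cl_g(L_g). -/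
/-!
Put `N := cl L` and `J := N : z`. Since `cl` commutes with localization, `z/1 ∈ cl_a(L_a)` says
`z/1 ∈ N_a`, i.e. `a ^ n • z ∈ N` for some `n`, i.e. `a ∈ √J`. The hypotheses thus put every
`f α` into `√J`, hence `√(f α : α ∈ A) ⊆ √J`, and `g ∈ √J` is the conclusion read backwards.
-/

namespace Submodule

theorem apply_mem_localized'_iff {R S M N : Type*} [CommSemiring R] [CommSemiring S]
    [AddCommMonoid M] [AddCommMonoid N] [Module R M] [Module R N] [Algebra R S] [Module S N]
    [IsScalarTower R S N] (p : Submonoid R) [IsLocalization p S] (f : M →ₗ[R] N)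
    [IsLocalizedModule p f] (M' : Submodule R M) (x : M) :
    f x ∈ M'.localized' S p f ↔ ∃ s : p, s • x ∈ M' := by
  constructor
  · rintro ⟨m, hm, s, hfx⟩
    rw [IsLocalizedModule.mk'_eq_iff, Submonoid.smul_def, ← map_smul] at hfx
    obtain ⟨c, hc⟩ := (IsLocalizedModule.eq_iff_exists p f).mp hfx
    refine ⟨c * s, ?_⟩
    rw [mul_smul, Submonoid.smul_def s, ← hc]
    exact M'.smul_mem c hm
  · rintro ⟨s, hs⟩
    exact ⟨s • x, hs, s, IsLocalizedModule.mk'_cancel f x s⟩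

theorem mkLinearMap_mem_localized_powers_iff {R M : Type*} [CommSemiring R] [AddCommMonoid M]
    [Module R M] (N : Submodule R M) (a : R) (x : M) :
    LocalizedModule.mkLinearMap (Submonoid.powers a) M x ∈ N.localized (Submonoid.powers a) ↔
      a ∈ (N.colon {x}).radical := by
  simp only [localized, apply_mem_localized'_iff, Subtype.exists, Submonoid.mk_smul,
    Submonoid.mem_powers_iff, exists_prop, exists_exists_eq_and, Ideal.mem_radical_iff,
    mem_colon_singleton]

end Submodule

theorem glueable_of_commutes_with_localization_submodules_general {R : Type*} [CommRing R]
    {M : Type*} [AddCommGroup M] [Module R M]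
    (cl : Submodule R M → Submodule R M)
    (clg : ∀ g : R, Submodule (Localization.Away g) (LocalizedModule (Submonoid.powers g) M) →
      Submodule (Localization.Away g) (LocalizedModule (Submonoid.powers g) M))
    (hloc : ∀ g : R, ∀ L : Submodule R M,
      clg g (L.localized (Submonoid.powers g)) = (cl L).localized (Submonoid.powers g))
    {A : Type*} (f : A → R) (g : R)
    (hg : g ∈ (Ideal.span (Set.range f)).radical)
    (L : Submodule R M) (z : M)
    (hz : ∀ α : A, LocalizedModule.mkLinearMap (Submonoid.powers (f α)) M z
      ∈ clg (f α) (L.localized (Submonoid.powers (f α)))) :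
    LocalizedModule.mkLinearMap (Submonoid.powers g) M z
      ∈ clg g (L.localized (Submonoid.powers g)) := by
  have mem_clg_iff (a : R) : LocalizedModule.mkLinearMap (Submonoid.powers a) M z ∈
      clg a (L.localized (Submonoid.powers a)) ↔ a ∈ ((cl L).colon {z}).radical := by
    rw [hloc, Submodule.mkLinearMap_mem_localized_powers_iff]
  simp only [mem_clg_iff] at hz ⊢
  exact Ideal.radical_le_radical_iff.mpr (Ideal.span_le.mpr (Set.range_subset_iff.mpr hz)) hg

/-- A preclosure operation on submodules that commutes with localization at single
elements is glueable. -/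
theorem glueable_of_commutes_with_localization_submodules {R : Type*} [CommRing R]
    {M : Type*} [AddCommGroup M] [Module R M]
    (cl : Submodule R M → Submodule R M)
    (clg : ∀ g : R, Submodule (Localization.Away g) (LocalizedModule (Submonoid.powers g) M) →
      Submodule (Localization.Away g) (LocalizedModule (Submonoid.powers g) M))
    (hext : ∀ L : Submodule R M, L ≤ cl L)
    (hmono : ∀ L L' : Submodule R M, L ≤ L' → cl L ≤ cl L')
    (hextg : ∀ g : R,
      ∀ L : Submodule (Localization.Away g) (LocalizedModule (Submonoid.powers g) M),
        L ≤ clg g L)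
    (hmonog : ∀ g : R,
      ∀ L L' : Submodule (Localization.Away g) (LocalizedModule (Submonoid.powers g) M),
        L ≤ L' → clg g L ≤ clg g L')
    (hloc : ∀ g : R, ∀ L : Submodule R M,
      clg g (L.localized (Submonoid.powers g)) = (cl L).localized (Submonoid.powers g))
    {A : Type*} (f : A → R) (g : R)
    (hg : g ∈ (Ideal.span (Set.range f)).radical)
    (L : Submodule R M) (z : M)
    (hz : ∀ α : A, LocalizedModule.mkLinearMap (Submonoid.powers (f α)) M z
      ∈ clg (f α) (L.localized (Submonoid.powers (f α)))) :
    LocalizedModule.mkLinearMap (Submonoid.powers g) M z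
      ∈ clg g (L.localized (Submonoid.powers g)) :=
  glueable_of_commutes_with_localization_submodules_general cl clg hloc f g hg L z hz
end

section
/- Let p be a prime, let R be a Noetherian commutative ring of characteristic p, let I be an ideal of R, and let z ∈ R. Let (f_α)_{α∈A} and (g_β)_{β∈B} be two families of elements of R such that the ideals they generate have the same radical. Then the image z/1 of z in R_{f_α} lies in the tight closure (I·R_{f_α})^* for all α ∈ A if and only if the image z/1 of z in R_{g_β} lies in the tight closure (I·R_{g_β})^* for all β ∈ B. -/
/-- `offMinimal S` is `S°`, the set of elements of `S` lying outside every minimal prime. -/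
def offMinimal (S : Type*) [CommRing S] : Set S :=
  {c : S | ∀ P ∈ minimalPrimes S, c ∉ P}

/-- The bracket power `J^[q]`, generated by `q`-th powers of elements of `J`. -/
def bracketPow {S : Type*} [CommRing S] (J : Ideal S) (q : ℕ) : Ideal S :=
  Ideal.span ((fun a => a ^ q) '' (J : Set S))

/-- The tight closure `J^*` of an ideal `J` in a ring of characteristic `p`. -/
def tightClosure (p : ℕ) {S : Type*} [CommRing S] (J : Ideal S) : Set S :=
  {z : S | ∃ c ∈ offMinimal S, ∃ e₀ : ℕ, ∀ e : ℕ, e₀ ≤ e →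
    c * z ^ p ^ e ∈ bracketPow J (p ^ e)}

/-!
Everything can be read off in `R`. For `h ∈ R`, the condition `z/1 ∈ (I R_h)^*` says exactly that
`h` lies in the ideal `tightLocus p I z` of those `h` for which some `c ∈ R°` eventually gives
`h ∈ √(I^[q] : c z^q)`; this ideal is radical, so the condition holds for all members of a family
iff the radical of the ideal they generate lies in it.

The only subtle point is that a test element of `R_h` can be replaced, up to a unit of `R_h`, by
one in `R°`. The minimal primes of `R_h` are the minimal primes of `R` not containing `h`; by prime
avoidance over the finitely many minimal primes there is `w` killed by a power of `h` and lying in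
no minimal prime that contains `h`. Writing the test element as `d / hⁿ`, the element `h d + w` then
lies in `R°` and agrees with `d` up to a unit of `R_h`.
-/

open IsLocalization

section offMinimal

variable {S : Type*} [CommRing S]

theorem IsUnit.mem_offMinimal {u : S} (hu : IsUnit u) : u ∈ offMinimal S :=
  fun P hP hmem => hP.isPrime.ne_top (P.eq_top_of_isUnit_mem hmem hu)

theorem mul_mem_offMinimal {a b : S} (ha : a ∈ offMinimal S) (hb : b ∈ offMinimal S) :
    a * b ∈ offMinimal S :=
  fun P hP hmem => (hP.isPrime.mem_or_mem hmem).elim (ha P hP) (hb P hP)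

end offMinimal

section

variable {R : Type*} [CommRing R]

theorem Ideal.colon_singleton_le_colon_singleton_of_dvd (J : Ideal R) {a b : R} (hab : a ∣ b) :
    J.colon {a} ≤ J.colon {b} := by
  obtain ⟨k, rfl⟩ := hab
  intro r hr
  rw [Submodule.mem_colon_singleton, smul_eq_mul] at hr ⊢
  rw [← mul_assoc]
  exact J.mul_mem_right k hr

section Localization

variable {S : Type*} [CommRing S] [Algebra R S]

theorem bracketPow_map_algebraMap (M : Submonoid R) [IsLocalization M S] (J : Ideal R) (q : ℕ) :
    bracketPow (J.map (algebraMap R S)) q = (bracketPow J q).map (algebraMap R S) := by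
  refine le_antisymm (Ideal.span_le.2 ?_) (Ideal.map_le_iff_le_comap.2 (Ideal.span_le.2 ?_))
  · rintro _ ⟨a, ha, rfl⟩
    obtain ⟨⟨⟨j, hj⟩, m⟩, hjm⟩ := (mem_map_algebraMap_iff M S).1 ha
    rw [SetLike.mem_coe, ← Ideal.unit_mul_mem_iff_mem _ ((map_units S m).pow q), mul_comm,
      ← mul_pow, hjm, ← map_pow]
    exact Ideal.mem_map_of_mem _ (Ideal.subset_span ⟨j, hj, rfl⟩)
  · rintro _ ⟨j, hj, rfl⟩
    rw [SetLike.mem_coe, Ideal.mem_comap, map_pow]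
    exact Ideal.subset_span ⟨_, Ideal.mem_map_of_mem _ hj, rfl⟩

theorem algebraMap_mem_offMinimal_iff (M : Submonoid R) [IsLocalization M S] (c : R) :
    algebraMap R S c ∈ offMinimal S ↔ ∀ Q ∈ minimalPrimes R, Disjoint (M : Set R) Q → c ∉ Q := by
  have hmin : minimalPrimes S = Ideal.under R ⁻¹' minimalPrimes R := by
    simpa only [Ideal.map_bot] using minimalPrimes_map M S (⊥ : Ideal R)
  constructor
  · intro hc Q hQ hdisj hcQ
    refine hc (Q.map (algebraMap R S)) ?_ (Ideal.mem_map_of_mem _ hcQ)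
    rwa [hmin, Set.mem_preimage, under_map_of_isPrime_disjoint M S hQ.isPrime hdisj]
  · intro hc P hP hcP
    have hP' : P.under R ∈ minimalPrimes R := by rwa [hmin] at hP
    exact hc _ hP' ((isPrime_iff_isPrime_disjoint M S P).1 hP.isPrime).2 hcP

end Localization

theorem mem_radical_colon_singleton_iff (J : Ideal R) (h y : R) :
    h ∈ (J.colon {y}).radical ↔
      algebraMap R (Localization.Away h) y ∈ J.map (algebraMap R (Localization.Away h)) := by
  simp [Ideal.radical, algebraMap_mem_map_algebraMap_iff (Submonoid.powers h),
    Submonoid.mem_powers_iff]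

theorem exists_pow_mul_eq_zero_notMem_minimalPrimes [IsNoetherianRing R] (h : R) :
    ∃ w : R, ∃ N : ℕ, h ^ N * w = 0 ∧ ∀ Q ∈ minimalPrimes R, h ∈ Q → w ∉ Q := by
  classical
  have hfin := minimalPrimes.finite_of_isNoetherianRing R
  set T := hfin.toFinset.filter (h ∉ ·)
  have havoid :
      ¬ ((T.inf id : Ideal R) : Set R) ⊆ ⋃ Q ∈ {Q ∈ minimalPrimes R | h ∈ Q}, (Q : Set R) := by
    rw [Ideal.subset_union_prime_finite (hfin.subset (Set.sep_subset _ _)) ⊥ ⊥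
      fun Q hQ _ _ => hQ.1.isPrime]
    rintro ⟨Q', ⟨hQ'min, hhQ'⟩, hle⟩
    obtain ⟨Q, hQT, hQle⟩ := hQ'min.isPrime.inf_le'.1 hle
    rw [Finset.mem_filter, Set.Finite.mem_toFinset] at hQT
    exact hQT.2 (hQ'min.2 hQT.1.1 hQle hhQ')
  obtain ⟨u, hu, hu'⟩ := Set.not_subset.1 havoid
  obtain ⟨N, hN⟩ : h * u ∈ (⊥ : Ideal R).radical := by
    rw [← Ideal.sInf_minimalPrimes]
    refine Ideal.mem_sInf.2 fun Q hQ => ?_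
    by_cases hhQ : h ∈ Q
    · exact Q.mul_mem_right u hhQ
    · refine Q.mul_mem_left h (Submodule.mem_finsetInf.1 hu Q ?_)
      simp [T, hfin.mem_toFinset, hQ, hhQ]
  refine ⟨u ^ N, N, by rwa [← mul_pow, ← Ideal.mem_bot], fun Q hQ hhQ huQ => hu' ?_⟩
  exact Set.mem_biUnion ⟨hQ, hhQ⟩ (hQ.isPrime.mem_of_pow_mem N huQ)

theorem exists_mem_offMinimal_pow_mul_eq [IsNoetherianRing R] {h d : R}
    (hd : ∀ Q ∈ minimalPrimes R, h ∉ Q → d ∉ Q) :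
    ∃ c ∈ offMinimal R, ∃ N : ℕ, h ^ N * c = h ^ (N + 1) * d := by
  obtain ⟨w, N, hw, hwQ⟩ := exists_pow_mul_eq_zero_notMem_minimalPrimes h
  refine ⟨h * d + w, fun Q hQ hmem => ?_, N, by rw [mul_add, hw, add_zero, pow_succ, mul_assoc]⟩
  have hQp := hQ.isPrime
  by_cases hhQ : h ∈ Q
  · exact hwQ Q hQ hhQ ((Q.add_mem_iff_right (Q.mul_mem_right d hhQ)).1 hmem)
  · have hwQ' : w ∈ Q :=
      (hQp.mem_or_mem (hw ▸ Q.zero_mem)).resolve_left (mt (hQp.mem_of_pow_mem N) hhQ)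
    exact (hQp.mem_or_mem ((Q.add_mem_iff_left hwQ').1 hmem)).elim hhQ (hd Q hQ hhQ)

theorem exists_mem_offMinimal_associated_algebraMap [IsNoetherianRing R] {h : R}
    {c : Localization.Away h} (hc : c ∈ offMinimal (Localization.Away h)) :
    ∃ c' ∈ offMinimal R, Associated c (algebraMap R (Localization.Away h) c') := by
  obtain ⟨⟨d, m⟩, hdm⟩ := surj (S := Localization.Away h) (Submonoid.powers h) c
  have hd : ∀ Q ∈ minimalPrimes R, h ∉ Q → d ∉ Q := by
    intro Q hQ hhQ
    have := hQ.isPrime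
    refine (algebraMap_mem_offMinimal_iff (S := Localization.Away h) (Submonoid.powers h) d).1
      ?_ Q hQ ((Ideal.disjoint_powers_iff_notMem_of_isPrime h).2 hhQ)
    exact hdm ▸ mul_mem_offMinimal hc (map_units (Localization.Away h) m).mem_offMinimal
  obtain ⟨c', hc', N, hN⟩ := exists_mem_offMinimal_pow_mul_eq hd
  have hunit (n : ℕ) : IsUnit (algebraMap R (Localization.Away h) (h ^ n)) :=
    (map_pow (algebraMap R (Localization.Away h)) h n).symm ▸ (Away.algebraMap_isUnit h).pow n
  refine ⟨c', hc', ?_⟩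
  calc Associated c (c * algebraMap R _ m) :=
        associated_mul_unit_right _ _ (map_units (Localization.Away h) m)
    _ = algebraMap R _ d := hdm
    Associated _ (algebraMap R _ (h ^ (N + 1)) * algebraMap R _ d) :=
      associated_unit_mul_right _ _ (hunit _)
    _ = algebraMap R _ (h ^ N) * algebraMap R _ c' := by rw [← map_mul, ← map_mul, hN]
    Associated _ (algebraMap R _ c') := (associated_unit_mul_right _ _ (hunit N)).symm

def tightLocus (p : ℕ) (I : Ideal R) (z : R) : Ideal R where
  carrier := {h | ∃ c ∈ offMinimal R, ∃ e₀ : ℕ, ∀ e, e₀ ≤ e →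
    h ∈ ((bracketPow I (p ^ e)).colon {c * z ^ p ^ e}).radical}
  zero_mem' := ⟨1, isUnit_one.mem_offMinimal, 0, fun _ _ => Ideal.zero_mem _⟩
  add_mem' := by
    rintro a b ⟨c, hc, e₀, ha⟩ ⟨c', hc', e₀', hb⟩
    refine ⟨c * c', mul_mem_offMinimal hc hc', max e₀ e₀', fun e he => Ideal.add_mem _ ?_ ?_⟩
    · refine Ideal.radical_mono (Ideal.colon_singleton_le_colon_singleton_of_dvd _ ?_)
        (ha e (le_of_max_le_left he))
      exact mul_dvd_mul_right (dvd_mul_right c c') _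
    · refine Ideal.radical_mono (Ideal.colon_singleton_le_colon_singleton_of_dvd _ ?_)
        (hb e (le_of_max_le_right he))
      exact mul_dvd_mul_right (dvd_mul_left c' c) _
  smul_mem' := by
    rintro r h ⟨c, hc, e₀, hh⟩
    exact ⟨c, hc, e₀, fun e he => Ideal.mul_mem_left _ r (hh e he)⟩

theorem tightLocus_isRadical (p : ℕ) (I : Ideal R) (z : R) : (tightLocus p I z).IsRadical := by
  rintro h ⟨n, c, hc, e₀, hh⟩
  exact ⟨c, hc, e₀, fun e he => Ideal.mem_radical_of_pow_mem (hh e he)⟩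

theorem mem_tightLocus_iff (p : ℕ) (I : Ideal R) (z h : R) :
    h ∈ tightLocus p I z ↔ ∃ c ∈ offMinimal R, ∃ e₀ : ℕ, ∀ e, e₀ ≤ e →
      algebraMap R (Localization.Away h) c * algebraMap R (Localization.Away h) z ^ p ^ e ∈
        bracketPow (I.map (algebraMap R (Localization.Away h))) (p ^ e) := by
  simp only [bracketPow_map_algebraMap (Submonoid.powers h), ← map_pow, ← map_mul,
    ← mem_radical_colon_singleton_iff]
  rfl

theorem algebraMap_mem_tightClosure_away_iff [IsNoetherianRing R] (p : ℕ) (I : Ideal R)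
    (z h : R) :
    algebraMap R (Localization.Away h) z ∈
        tightClosure p (I.map (algebraMap R (Localization.Away h))) ↔
      h ∈ tightLocus p I z := by
  rw [mem_tightLocus_iff]
  constructor
  · rintro ⟨c, hc, e₀, hce⟩
    obtain ⟨c', hc', u, hu⟩ := exists_mem_offMinimal_associated_algebraMap hc
    refine ⟨c', hc', e₀, fun e he => ?_⟩
    rw [← hu, mul_right_comm]
    exact Ideal.mul_mem_right _ _ (hce e he)
  · rintro ⟨c, hc, e₀, hce⟩
    refine ⟨_, ?_, e₀, hce⟩
    exact (algebraMap_mem_offMinimal_iff (Submonoid.powers h) c).2 fun Q hQ _ => hc Q hQ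

theorem forall_algebraMap_mem_tightClosure_away_iff [IsNoetherianRing R] (p : ℕ) (I : Ideal R)
    (z : R) {ι : Type*} (f : ι → R) :
    (∀ i, algebraMap R (Localization.Away (f i)) z ∈
        tightClosure p (I.map (algebraMap R (Localization.Away (f i))))) ↔
      (Ideal.span (Set.range f)).radical ≤ tightLocus p I z := by
  simp only [algebraMap_mem_tightClosure_away_iff, (tightLocus_isRadical p I z).radical_le_iff,
    Ideal.span_le, Set.range_subset_iff, SetLike.mem_coe]

end

theorem tightClosure_localization_radical_independence_general (p : ℕ)
    {R : Type*} [CommRing R] [IsNoetherianRing R]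
    {A B : Type*} (f : A → R) (g : B → R)
    (hfg : (Ideal.span (Set.range f)).radical = (Ideal.span (Set.range g)).radical)
    (I : Ideal R) (z : R) :
    (∀ α : A, algebraMap R (Localization.Away (f α)) z
        ∈ tightClosure p (I.map (algebraMap R (Localization.Away (f α))))) ↔
    (∀ β : B, algebraMap R (Localization.Away (g β)) z
        ∈ tightClosure p (I.map (algebraMap R (Localization.Away (g β))))) := by
  rw [forall_algebraMap_mem_tightClosure_away_iff, forall_algebraMap_mem_tightClosure_away_iff,
    hfg]

/-- membership of `z/1` in the tight closure of `I` in the localizations `R_{f_α}`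
depends only on the radical of the ideal generated by the `f_α`. -/
theorem tightClosure_localization_radical_independence (p : ℕ) (hp : p.Prime)
    {R : Type*} [CommRing R] [IsNoetherianRing R] [CharP R p]
    {A B : Type*} (f : A → R) (g : B → R)
    (hfg : (Ideal.span (Set.range f)).radical = (Ideal.span (Set.range g)).radical)
    (I : Ideal R) (z : R) :
    (∀ α : A, algebraMap R (Localization.Away (f α)) z
        ∈ tightClosure p (I.map (algebraMap R (Localization.Away (f α))))) ↔
    (∀ β : B, algebraMap R (Localization.Away (g β)) z
        ∈ tightClosure p (I.map (algebraMap R (Localization.Away (g β))))) :=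
  tightClosure_localization_radical_independence_general p f g hfg I z
end

section
/- Tight closure of ideals is openly persistent along localization at single elements: let p be a prime, let R be a Noetherian commutative ring of characteristic p, let I be an ideal of R, let f ∈ R, and let z ∈ R with z in the tight closure I^*. Then the image z/1 of z in R_f lies in the tight closure (I·R_f)^*. -/
/-! A test element `c` for `z` stays a test element after localizing, since minimal primes of
`R_f` contract to minimal primes of `R`; and bracket powers extend into bracket powers. -/

section

variable {R S : Type*} [CommRing R] [CommRing S]

lemma bracketPow_map_le (φ : R →+* S) (J : Ideal R) (q : ℕ) :
    (bracketPow J q).map φ ≤ bracketPow (J.map φ) q := by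
  rw [bracketPow, Ideal.map_span]
  apply Ideal.span_mono
  rintro _ ⟨_, ⟨a, ha, rfl⟩, rfl⟩
  exact ⟨φ a, Ideal.mem_map_of_mem φ ha, (map_pow φ a q).symm⟩

lemma map_mem_offMinimal {φ : R →+* S}
    (hφ : ∀ Q ∈ minimalPrimes S, Q.comap φ ∈ minimalPrimes R) {c : R}
    (hc : c ∈ offMinimal R) : φ c ∈ offMinimal S :=
  fun Q hQ hcQ => hc (Q.comap φ) (hφ Q hQ) hcQ

-- `hφ` holds for every flat map, by going down.
theorem map_mem_tightClosure {p : ℕ} {φ : R →+* S}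
    (hφ : ∀ Q ∈ minimalPrimes S, Q.comap φ ∈ minimalPrimes R) {I : Ideal R} {z : R}
    (hz : z ∈ tightClosure p I) : φ z ∈ tightClosure p (I.map φ) := by
  obtain ⟨c, hc, e₀, hcz⟩ := hz
  refine ⟨φ c, map_mem_offMinimal hφ hc, e₀, fun e he => ?_⟩
  apply bracketPow_map_le φ I (p ^ e)
  simpa only [map_mul, map_pow] using Ideal.mem_map_of_mem φ (hcz e he)

lemma IsLocalization.comap_mem_minimalPrimes [Algebra R S] (M : Submonoid R)
    [IsLocalization M S] {Q : Ideal S} (hQ : Q ∈ minimalPrimes S) :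
    Q.comap (algebraMap R S) ∈ minimalPrimes R := by
  rw [minimalPrimes_eq_minimals] at hQ ⊢
  have hQprime : Q.IsPrime := hQ.1
  refine ⟨Ideal.comap_isPrime _ Q, fun P hP hPQ => ?_⟩
  have hdisj : Disjoint (M : Set R) P :=
    ((IsLocalization.disjoint_under_iff M S Q).2 hQprime.ne_top).mono_right hPQ
  have hQP : Q ≤ P.map (algebraMap R S) :=
    hQ.2 (IsLocalization.isPrime_of_isPrime_disjoint M S P hP hdisj)
      (Ideal.map_le_iff_le_comap.2 hPQ)
  calc Q.comap (algebraMap R S) ≤ (P.map (algebraMap R S)).comap (algebraMap R S) :=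
        Ideal.comap_mono hQP
    _ = P := IsLocalization.under_map_of_isPrime_disjoint M S hP hdisj

end

theorem tightClosure_openlyPersistent_general (p : ℕ)
    {R : Type*} [CommRing R]
    (I : Ideal R) (f : R) (z : R) (hz : z ∈ tightClosure p I) :
    algebraMap R (Localization.Away f) z
      ∈ tightClosure p (I.map (algebraMap R (Localization.Away f))) :=
  map_mem_tightClosure
    (fun _ hQ => IsLocalization.comap_mem_minimalPrimes (Submonoid.powers f) hQ) hz

/-- tight closure of ideals is openly persistent along localization at single
elements. -/
theorem tightClosure_openlyPersistent (p : ℕ) (hp : p.Prime)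
    {R : Type*} [CommRing R] [IsNoetherianRing R] [CharP R p]
    (I : Ideal R) (f : R) (z : R) (hz : z ∈ tightClosure p I) :
    algebraMap R (Localization.Away f) z
      ∈ tightClosure p (I.map (algebraMap R (Localization.Away f))) :=
  tightClosure_openlyPersistent_general p I f z hz
end

section
/- a^t-tight closure of ideals is openly persistent along localization at single elements: let p be a prime, let R be a Noetherian commutative ring of characteristic p, let n ≥ 0, let a₁,…,aₙ be ideals of R with aᵢ ∩ R° ≠ ∅ for each i, and let t₁,…,tₙ be nonnegative real numbers. Let J be an ideal of R, let f ∈ R, and let z ∈ R lie in the a₁^{t₁}⋯aₙ^{tₙ}-tight closure of J. Then the image z/1 of z in R_f lies in the (a₁·R_f)^{t₁}⋯(aₙ·R_f)^{tₙ}-tight closure of J·R_f, and moreover each extended ideal aᵢ·R_f meets (R_f)°. -/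
/-- The `a₁^{t₁} ⋯ aₙ^{tₙ}`-tight closure of an ideal `J` in a ring of characteristic `p`:
`z` belongs to it if there are `c ∈ S°` and a power `p^e₀` such that
`c ⬝ a₁^{⌈t₁ q⌉} ⋯ aₙ^{⌈tₙ q⌉} ⬝ z^q ⊆ J^[q]` for all `q = p^e ≥ p^e₀`. -/
def atTightClosure (p : ℕ) {S : Type*} [CommRing S] {n : ℕ} (a : Fin n → Ideal S)
    (t : Fin n → ℝ) (J : Ideal S) : Set S :=
  {z : S | ∃ c ∈ offMinimal S, ∃ e₀ : ℕ, ∀ e : ℕ, e₀ ≤ e →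
    ∀ x ∈ (∏ i, a i ^ ⌈t i * (p : ℝ) ^ e⌉₊ : Ideal S),
      c * x * z ^ p ^ e ∈ bracketPow J (p ^ e)}

/-!
A witness `c ∈ R°` for `z` remains a witness after localizing. Minimal primes of `R_f` contract
to minimal primes of `R`, so `R → R_f` carries `R°` into `(R_f)°`. The containment
`c ⬝ a^{⌈tq⌉} ⬝ z^q ⊆ J^[q]` survives extension of ideals, because extension commutes with
products and powers of ideals and sends `J^[q]` into `(J R_f)^[q]`.
-/

lemma IsLocalization.under_mem_minimalPrimes {R S : Type*} [CommRing R] [CommRing S]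
    [Algebra R S] (M : Submonoid R) [IsLocalization M S] {Q : Ideal S}
    (hQ : Q ∈ minimalPrimes S) : Q.under R ∈ minimalPrimes R := by
  have := IsLocalization.minimalPrimes_map M S (⊥ : Ideal R)
  rw [Ideal.map_bot] at this
  exact (this ▸ hQ : Q ∈ Ideal.under R ⁻¹' minimalPrimes R)

lemma IsLocalization.algebraMap_mem_offMinimal {R S : Type*} [CommRing R] [CommRing S]
    [Algebra R S] (M : Submonoid R) [IsLocalization M S] {c : R}
    (hc : c ∈ offMinimal R) : algebraMap R S c ∈ offMinimal S :=
  fun _ hQ hcQ => hc _ (IsLocalization.under_mem_minimalPrimes M hQ) hcQ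

section MapRingHom

variable {R S : Type*} [CommRing R] [CommRing S] (φ : R →+* S)

lemma map_bracketPow_le (J : Ideal R) (q : ℕ) :
    (bracketPow J q).map φ ≤ bracketPow (J.map φ) q := by
  rw [bracketPow, Ideal.map_span]
  refine Ideal.span_mono ?_
  rintro _ ⟨_, ⟨x, hx, rfl⟩, rfl⟩
  exact ⟨φ x, Ideal.mem_map_of_mem φ hx, (map_pow φ x q).symm⟩

lemma Ideal.map_mul_mem_of_forall_mul_mem {I K : Ideal R} {y : R}
    (h : ∀ x ∈ I, y * x ∈ K) : ∀ x ∈ I.map φ, φ y * x ∈ K.map φ := by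
  rw [← Ideal.span_singleton_mul_le_iff] at h ⊢
  simpa only [Ideal.map_span, Set.image_singleton, Ideal.map_mul] using Ideal.map_mono (f := φ) h

lemma Ideal.map_prod_pow {n : ℕ} (a : Fin n → Ideal R) (k : Fin n → ℕ) :
    (∏ i, a i ^ k i).map φ = ∏ i, (a i).map φ ^ k i := by
  change Ideal.mapHom φ _ = _
  simp only [map_prod, map_pow]
  rfl

lemma map_mem_atTightClosure (hφ : ∀ c ∈ offMinimal R, φ c ∈ offMinimal S) (p : ℕ) {n : ℕ}
    (a : Fin n → Ideal R) (t : Fin n → ℝ) (J : Ideal R) {z : R}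
    (hz : z ∈ atTightClosure p a t J) :
    φ z ∈ atTightClosure p (fun i => (a i).map φ) t (J.map φ) := by
  obtain ⟨c, hc, e₀, h⟩ := hz
  refine ⟨φ c, hφ c hc, e₀, fun e he x hx => ?_⟩
  have key : ∀ x ∈ (∏ i, a i ^ ⌈t i * (p : ℝ) ^ e⌉₊ : Ideal R),
      c * z ^ p ^ e * x ∈ bracketPow J (p ^ e) := fun x hx => by
    simpa only [mul_right_comm] using h e he x hx
  rw [← Ideal.map_prod_pow] at hx
  have := map_bracketPow_le φ J (p ^ e) (Ideal.map_mul_mem_of_forall_mul_mem φ key x hx)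
  simpa only [map_mul, map_pow, mul_right_comm] using this

end MapRingHom

theorem atTightClosure_openlyPersistent_general (p : ℕ)
    {R : Type*} [CommRing R]
    {n : ℕ} (a : Fin n → Ideal R) (ha : ∀ i, ∃ c ∈ offMinimal R, c ∈ a i)
    (t : Fin n → ℝ)
    (J : Ideal R) (f : R) (z : R) (hz : z ∈ atTightClosure p a t J) :
    algebraMap R (Localization.Away f) z
      ∈ atTightClosure p (fun i => (a i).map (algebraMap R (Localization.Away f))) t
          (J.map (algebraMap R (Localization.Away f))) ∧
    ∀ i, ∃ c ∈ offMinimal (Localization.Away f),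
      c ∈ (a i).map (algebraMap R (Localization.Away f)) := by
  have hφ : ∀ c ∈ offMinimal R, algebraMap R (Localization.Away f) c ∈ offMinimal _ :=
    fun _ => IsLocalization.algebraMap_mem_offMinimal (Submonoid.powers f)
  refine ⟨map_mem_atTightClosure _ hφ p a t J hz, fun i => ?_⟩
  obtain ⟨c, hc, hca⟩ := ha i
  exact ⟨_, hφ c hc, Ideal.mem_map_of_mem _ hca⟩

/-- `a^t`-tight closure of ideals is openly persistent along localization at single
elements, and the extended ideals `aᵢ R_f` still meet `(R_f)°`. -/
theorem atTightClosure_openlyPersistent (p : ℕ) (hp : p.Prime)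
    {R : Type*} [CommRing R] [IsNoetherianRing R] [CharP R p]
    {n : ℕ} (a : Fin n → Ideal R) (ha : ∀ i, ∃ c ∈ offMinimal R, c ∈ a i)
    (t : Fin n → ℝ) (ht : ∀ i, 0 ≤ t i)
    (J : Ideal R) (f : R) (z : R) (hz : z ∈ atTightClosure p a t J) :
    algebraMap R (Localization.Away f) z
      ∈ atTightClosure p (fun i => (a i).map (algebraMap R (Localization.Away f))) t
          (J.map (algebraMap R (Localization.Away f))) ∧
    ∀ i, ∃ c ∈ offMinimal (Localization.Away f),
      c ∈ (a i).map (algebraMap R (Localization.Away f)) :=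
  atTightClosure_openlyPersistent_general p a ha t J f z hz
end

section
/- Let R be a Noetherian commutative ring of minimal-prime-avoiding elements, and let (f_i)_{i∈A} be elements of R generating the unit ideal. Let a be an ideal of R such that for each i ∈ A, the extended ideal a·R_{f_i} contains an element lying outside every minimal prime ideal of R_{f_i}. Then a contains an element lying outside every minimal prime ideal of R. -/
theorem IsLocalization.map_mem_minimalPrimes {R : Type*} [CommRing R] (M : Submonoid R)
    (S : Type*) [CommRing S] [Algebra R S] [IsLocalization M S] {p : Ideal R}
    (hp : p ∈ minimalPrimes R) (hM : Disjoint (M : Set R) p) :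
    p.map (algebraMap R S) ∈ minimalPrimes S := by
  have h := IsLocalization.minimalPrimes_map M S (⊥ : Ideal R)
  rw [Ideal.map_bot] at h
  change _ ∈ (⊥ : Ideal S).minimalPrimes
  rw [h, Set.mem_preimage, IsLocalization.under_map_of_isPrime_disjoint M S
    (Ideal.IsMinimalPrime.isPrime hp) hM]
  exact hp

theorem exists_mem_offMinimal_of_forall_not_le {R : Type*} [CommRing R]
    (hfin : (minimalPrimes R).Finite) {I : Ideal R} (hI : ∀ p ∈ minimalPrimes R, ¬ I ≤ p) :
    ∃ c ∈ offMinimal R, c ∈ I := by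
  have hnot : ¬ (I : Set R) ⊆ ⋃ p ∈ minimalPrimes R, (p : Set R) := by
    rw [Ideal.subset_union_prime_finite hfin ⊥ ⊥ fun p hp _ _ => Ideal.IsMinimalPrime.isPrime hp]
    rintro ⟨p, hp, hIp⟩
    exact hI p hp hIp
  obtain ⟨c, hcI, hc⟩ := Set.not_subset.mp hnot
  exact ⟨c, fun p hp hcp => hc (Set.mem_biUnion hp hcp), hcI⟩

theorem exists_notMem_of_span_range_eq_top {R A : Type*} [CommRing R] {f : A → R}
    (hf : Ideal.span (Set.range f) = ⊤) {p : Ideal R} (hp : p ≠ ⊤) : ∃ i, f i ∉ p := by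
  by_contra! h
  exact hp (top_le_iff.mp (hf ▸ Ideal.span_le.mpr (Set.range_subset_iff.mpr h)))

/-- if `(f_i)` generate the unit ideal of a Noetherian ring `R` and each extended
ideal `a R_{f_i}` meets `(R_{f_i})°`, then `a` meets `R°`. -/
theorem exists_offMinimal_of_forall_localization {R : Type*} [CommRing R] [IsNoetherianRing R]
    {A : Type*} (f : A → R) (hf : Ideal.span (Set.range f) = ⊤)
    (a : Ideal R)
    (ha : ∀ i : A, ∃ c ∈ offMinimal (Localization.Away (f i)),
      c ∈ a.map (algebraMap R (Localization.Away (f i)))) :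
    ∃ c ∈ offMinimal R, c ∈ a := by
  refine exists_mem_offMinimal_of_forall_not_le (minimalPrimes.finite_of_isNoetherianRing R)
    fun p hp hap => ?_
  have hprime := Ideal.IsMinimalPrime.isPrime hp
  obtain ⟨i, hi⟩ := exists_notMem_of_span_range_eq_top hf hprime.ne_top
  obtain ⟨c, hc, hca⟩ := ha i
  have hmin := IsLocalization.map_mem_minimalPrimes _ (Localization.Away (f i)) hp
    ((Ideal.disjoint_powers_iff_notMem_of_isPrime (f i)).mpr hi)
  exact hc _ hmin (Ideal.map_mono hap hca)
end
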